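/- For any finite graph G = (V,E) with minimum degree at least 2 and any r ∈ ℕ, there exists a vertex v ∈ V such that the spectral radius of the unraveled ball of radius r at v satisfies λ_1(G̃(v,r)) ≥ (1/|E|)·Σ_{u∈V} d(u)·√(d(u)−1) · cos(π/(r+2)). -/

import Mathlib

open Classical Real Filter SimpleGraph

/-- The multiset of adjacency eigenvalues of a finite simple graph, indexed by vertices. -/
noncomputable def adjEigs {V : Type*} [Fintype V] (G : SimpleGraph V) : V → ℝ :=
  Matrix.IsHermitian.eigenvalues (A := G.adjMatrix ℝ)
    (by rw [Matrix.IsHermitian, Matrix.conjTranspose_eq_transpose_of_trivial]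
        exact SimpleGraph.isSymm_adjMatrix G)

/-- The spectral radius (largest adjacency eigenvalue) of a finite simple graph. -/
noncomputable def lam1 {V : Type*} [Fintype V] (G : SimpleGraph V) : ℝ := ⨆ v, adjEigs G v

/-- The second largest adjacency eigenvalue (with multiplicity) of a finite simple graph. -/
noncomputable def lam2 {V : Type*} [Fintype V] (G : SimpleGraph V) : ℝ :=
  ⨆ p : {p : V × V // p.1 ≠ p.2}, min (adjEigs G p.1.1) (adjEigs G p.1.2)

/-- A non-backtracking walk of length `≤ r` starting at `v`: recorded as its list of
vertices (of length `≤ r + 1`, starting with `v`). -/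
structure NBWalk {V : Type*} (G : SimpleGraph V) (v : V) (r : ℕ) where
  toList : List V
  ne_nil : toList ≠ []
  head_eq : toList.head ne_nil = v
  length_le : toList.length ≤ r + 1
  chain : toList.Chain' G.Adj
  nonback : ∀ i : ℕ, ∀ h : i + 2 < toList.length,
    toList.get ⟨i, by omega⟩ ≠ toList.get ⟨i + 2, h⟩

/-- The unraveled ball of radius `r` centered at `v`: vertices are the non-backtracking
walks of length `≤ r` starting at `v`, two walks adjacent iff one is a one-step
extension of the other. -/
def unravBall {V : Type*} (G : SimpleGraph V) (v : V) (r : ℕ) : SimpleGraph (NBWalk G v r) :=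
  SimpleGraph.fromRel (fun w w' => ∃ x, w'.toList = w.toList ++ [x])

noncomputable instance {V : Type*} [Fintype V] {G : SimpleGraph V} {v : V} {r : ℕ} :
    Fintype (NBWalk G v r) :=
  haveI : Finite {l : List V // l.length ≤ r + 1} :=
    (List.finite_length_le V (r + 1)).to_subtype
  haveI : Finite (NBWalk G v r) := Finite.of_injective
    (fun w => (⟨w.toList, w.length_le⟩ : {l : List V // l.length ≤ r + 1}))
    (by rintro ⟨⟩ ⟨⟩ h; simp_all)
  Fintype.ofFinite _

/-- The root of the unraveled ball: the length-`0` walk `(v)`. -/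
def nbRoot {V : Type*} (G : SimpleGraph V) (v : V) (r : ℕ) : NBWalk G v r :=
  ⟨[v], by simp, rfl, by simp, List.isChain_singleton _, by intro i h; simp at h⟩

/-- The terminal vertex of a non-backtracking walk. -/
def NBWalk.term {V : Type*} {G : SimpleGraph V} {v : V} {r : ℕ} (w : NBWalk G v r) : V :=
  w.toList.getLast w.ne_nil

/-!
Fix `θ = π / (r + 2)` and put on the ball around `v` the test vector
`f(w) = sin((|w| + 1) θ) · √m(w)`, where `m(w)` is `d(v)` at the root and otherwise the
product of `(d(u) - 1)⁻¹` over the interior vertices `u` of `w`; thus `m(w) / d(v)` is the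
probability that a non-backtracking random walk from `v` starts along `w`. Summed over all
roots `v`, the walks of each length therefore carry total mass `2|E|`, and for `k ≥ 1` the last
edges of the walks of length `k` cover every directed edge of `G` with total weight `1`.
This gives `∑_v ⟨f, f⟩ = 2|E| ∑_k sin²((k + 1) θ)` and
`∑_v ⟨f, A f⟩ ≥ 2 ∑_u d(u) √(d(u) - 1) · ∑_k sin((k + 1) θ) sin((k + 2) θ)`.
The sine vector is the Perron eigenvector of the path on `r + 1` vertices, so the last sum is
`cos θ ∑_k sin²((k + 1) θ)`. Hence some `v` has Rayleigh quotient `⟨f, A f⟩ / ⟨f, f⟩` at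
least the claimed bound, and the Rayleigh quotient is at most `λ₁`.
-/

open Finset Matrix

theorem Finset.sum_sum_erase {α R : Type*} [DecidableEq α] [Ring R] (s : Finset α)
    (g : α → R) :
    ∑ a ∈ s, ∑ x ∈ s.erase a, g x = ((#s : R) - 1) * ∑ x ∈ s, g x := by
  rw [sum_congr rfl fun a ha => sum_erase_eq_sub ha, sum_sub_distrib, sum_const, nsmul_eq_mul,
    sub_mul, one_mul]

theorem SimpleGraph.sum_sum_neighborFinset_comm {V M : Type*} [Fintype V] [AddCommMonoid M]
    (G : SimpleGraph V) [DecidableRel G.Adj] (h : V → V → M) :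
    ∑ a, ∑ b ∈ G.neighborFinset a, h a b = ∑ b, ∑ a ∈ G.neighborFinset b, h a b := by
  simp_rw [neighborFinset_eq_filter, sum_filter]
  rw [sum_comm]
  simp_rw [adj_comm]

theorem SimpleGraph.dotProduct_adjMatrix_mulVec_eq_of_adj_iff {α R : Type*} [Fintype α]
    [CommSemiring R] (H : SimpleGraph α) [DecidableRel H.Adj] {rel : α → α → Prop}
    [DecidableRel rel] (hadj : ∀ a b, H.Adj a b ↔ rel a b ∨ rel b a)
    (hrel : ∀ a b, rel a b → ¬ rel b a) (f : α → R) :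
    f ⬝ᵥ H.adjMatrix R *ᵥ f = 2 * ∑ a, ∑ b, if rel a b then f a * f b else 0 := by
  have split (a b : α) : (if H.Adj a b then f a * f b else 0) =
      (if rel a b then f a * f b else 0) + (if rel b a then f b * f a else 0) := by
    by_cases hab : rel a b
    · simp [hadj, hab, hrel a b hab]
    · by_cases hba : rel b a <;> simp [hadj, hab, hba, mul_comm]
  rw [dotProduct_mulVec_adjMatrix]
  simp_rw [split, sum_add_distrib]
  rw [sum_comm (f := fun a b => if rel b a then f b * f a else 0), two_mul]

theorem Matrix.IsHermitian.dotProduct_mulVec_le_iSup_eigenvalues_mul {n : Type*} [Fintype n]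
    [DecidableEq n] {A : Matrix n n ℝ} (hA : A.IsHermitian) (f : n → ℝ) :
    f ⬝ᵥ A *ᵥ f ≤ (⨆ i, hA.eigenvalues i) * (f ⬝ᵥ f) := by
  set U : Matrix n n ℝ := (hA.eigenvectorUnitary : Matrix n n ℝ)
  have hUU : U * star U = 1 := mem_unitaryGroup_iff.1 hA.eigenvectorUnitary.2
  set g : n → ℝ := star U *ᵥ f
  have hAf : A *ᵥ f = U *ᵥ (diagonal hA.eigenvalues *ᵥ g) := by
    conv_lhs => rw [hA.spectral_theorem, Unitary.conjStarAlgAut_apply]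
    simp only [← mulVec_mulVec]
    rfl
  have hfU (x : n → ℝ) : f ⬝ᵥ U *ᵥ x = g ⬝ᵥ x := by
    rw [dotProduct_mulVec, ← mulVec_transpose, ← conjTranspose_eq_transpose_of_trivial]
    rfl
  have hff : f ⬝ᵥ f = g ⬝ᵥ g := by
    rw [← hfU, mulVec_mulVec, hUU, one_mulVec]
  rw [hAf, hfU, hff, dotProduct, dotProduct, mul_sum]
  refine sum_le_sum fun i _ => ?_
  rw [mulVec_diagonal, mul_left_comm]
  exact mul_le_mul_of_nonneg_right (le_ciSup (Set.finite_range _).bddAbove i) (mul_self_nonneg _)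

theorem dotProduct_adjMatrix_mulVec_le_lam1_mul {W : Type*} [Fintype W] (H : SimpleGraph W)
    (f : W → ℝ) : f ⬝ᵥ H.adjMatrix ℝ *ᵥ f ≤ lam1 H * (f ⬝ᵥ f) :=
  IsHermitian.dotProduct_mulVec_le_iSup_eigenvalues_mul
    (by rw [IsHermitian, conjTranspose_eq_transpose_of_trivial]; exact H.isSymm_adjMatrix) f

theorem sum_range_sin_mul_sin_eq_cos_mul_sum_sq (θ : ℝ) (r : ℕ) (h : sin ((r + 2) * θ) = 0) :
    ∑ k ∈ range r, sin ((k + 1) * θ) * sin ((k + 2) * θ) =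
      cos θ * ∑ k ∈ range (r + 1), sin ((k + 1) * θ) ^ 2 := by
  have three_term (k : ℕ) :
      sin ((k + 2) * θ) + sin (k * θ) = 2 * cos θ * sin ((k + 1) * θ) := by
    have h₁ : (k + 2) * θ = (k + 1) * θ + θ := by ring
    have h₂ : k * θ = (k + 1) * θ - θ := by ring
    rw [h₁, h₂, sin_add, sin_sub]
    ring
  have drop_last : ∑ k ∈ range (r + 1), sin ((k + 1) * θ) * sin ((k + 2) * θ) =
      ∑ k ∈ range r, sin ((k + 1) * θ) * sin ((k + 2) * θ) := by
    rw [sum_range_succ, h, mul_zero, add_zero]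
  have drop_first : ∑ k ∈ range (r + 1), sin (k * θ) * sin ((k + 1) * θ) =
      ∑ k ∈ range r, sin ((k + 1) * θ) * sin ((k + 2) * θ) := by
    rw [sum_range_succ', Nat.cast_zero, zero_mul, sin_zero, zero_mul, add_zero]
    refine sum_congr rfl fun k _ => ?_
    push_cast
    ring_nf
  have doubled : 2 * (cos θ * ∑ k ∈ range (r + 1), sin ((k + 1) * θ) ^ 2) =
      ∑ k ∈ range (r + 1), sin ((k + 1) * θ) * sin ((k + 2) * θ) +
        ∑ k ∈ range (r + 1), sin (k * θ) * sin ((k + 1) * θ) := by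
    rw [mul_sum, mul_sum, ← sum_add_distrib]
    refine sum_congr rfl fun k _ => ?_
    linear_combination (-sin ((k + 1) * θ)) * three_term k
  linarith

section Walks

variable {V : Type*} {G : SimpleGraph V} {v : V} {r : ℕ}

namespace NBWalk

theorem toList_injective : Function.Injective (toList : NBWalk G v r → List V) := by
  rintro ⟨⟩ ⟨⟩ h
  simp_all

def length (w : NBWalk G v r) : ℕ := w.toList.length - 1

theorem length_toList (w : NBWalk G v r) : w.toList.length = w.length + 1 := by
  have := List.length_pos_iff.2 w.ne_nil
  unfold length
  omega

theorem length_le_radius (w : NBWalk G v r) : w.length ≤ r := by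
  have := w.length_le
  rw [length_toList] at this
  omega

theorem getLast?_dropLast_eq_getElem {w : NBWalk G v r} (h : 1 < w.toList.length) :
    w.toList.dropLast.getLast? = some (w.toList[w.toList.length - 2]'(by omega)) := by
  rw [List.getLast?_eq_getElem?, List.getElem?_dropLast, List.length_dropLast,
    if_pos (by omega), List.getElem?_eq_getElem]
  rfl

def CanExtend (w : NBWalk G v r) (x : V) : Prop :=
  G.Adj w.term x ∧ x ∉ w.toList.dropLast.getLast?

noncomputable def extend (w : NBWalk G v r) (x : V) : NBWalk G v r :=
  if h : w.length < r ∧ w.CanExtend x then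
    { toList := w.toList ++ [x]
      ne_nil := by simp
      head_eq := by rw [List.head_append_left w.ne_nil]; exact w.head_eq
      length_le := by
        have := w.length_toList
        simp only [List.length_append, List.length_singleton]
        omega
      chain := List.isChain_append.2 ⟨w.chain, List.isChain_singleton x, by
        intro a ha b hb
        rw [List.getLast?_eq_some_getLast w.ne_nil, Option.mem_some_iff] at ha
        rw [List.head?_cons, Option.mem_some_iff] at hb
        exact ha ▸ hb ▸ h.2.1⟩
      nonback := by
        intro i hi
        simp only [List.length_append, List.length_singleton] at hi
        simp only [List.get_eq_getElem]
        rw [List.getElem_append_left (by omega)]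
        rcases Nat.lt_or_ge (i + 2) w.toList.length with hlt | hge
        · rw [List.getElem_append_left hlt]
          simpa using w.nonback i hlt
        · obtain rfl : i = w.toList.length - 2 := by omega
          simp only [show w.toList.length - 2 + 2 = w.toList.length by omega,
            List.getElem_append_right (le_refl _), Nat.sub_self, List.getElem_singleton]
          intro hx
          exact h.2.2 (by rw [getLast?_dropLast_eq_getElem (by omega), hx]; rfl) }
  else w

noncomputable def parent (w : NBWalk G v r) : NBWalk G v r :=
  if h : w.length ≠ 0 then
    { toList := w.toList.dropLast
      ne_nil := by
        rw [← List.length_pos_iff, List.length_dropLast, length_toList]; omega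
      head_eq := by
        rw [List.head_dropLast]; exact w.head_eq
      length_le := by
        have := w.length_le
        simp only [List.length_dropLast]
        omega
      chain := w.chain.dropLast
      nonback := by
        intro i hi
        simp only [List.length_dropLast] at hi
        simpa [List.getElem_dropLast] using w.nonback i (by omega) }
  else w

variable {w w' : NBWalk G v r} {x : V}

theorem canExtend_of_toList_eq_append (h : w'.toList = w.toList ++ [x]) : w.CanExtend x := by
  have hlen : w'.toList.length = w.toList.length + 1 := by simp [h]
  refine ⟨?_, fun hx => ?_⟩
  · have := (List.isChain_append.1 (h ▸ w'.chain)).2.2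
    exact this _ (List.getLast?_eq_some_getLast w.ne_nil) _ rfl
  · have h1 : 1 < w.toList.length := by
      by_contra h1
      rw [List.eq_nil_of_length_eq_zero (l := w.toList.dropLast)
        (by simp only [List.length_dropLast]; omega)] at hx
      simp at hx
    rw [getLast?_dropLast_eq_getElem h1, Option.mem_some_iff] at hx
    apply w'.nonback (w.toList.length - 2) (by omega)
    simp only [List.get_eq_getElem, List.getElem_of_eq h]
    rw [List.getElem_append_left (by omega), List.getElem_append_right (by omega)]
    simp [show w.toList.length - 2 + 2 - w.toList.length = 0 by omega, hx]

theorem toList_extend (hw : w.length < r) (hx : w.CanExtend x) :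
    (w.extend x).toList = w.toList ++ [x] := by
  rw [extend, dif_pos ⟨hw, hx⟩]

theorem length_extend (hw : w.length < r) (hx : w.CanExtend x) :
    (w.extend x).length = w.length + 1 := by
  have := (w.extend x).length_toList
  rw [toList_extend hw hx, List.length_append, length_toList] at this
  simpa using this.symm

theorem term_extend (hw : w.length < r) (hx : w.CanExtend x) : (w.extend x).term = x := by
  simp [term, toList_extend hw hx]

theorem toList_parent (hw : w.length ≠ 0) : w.parent.toList = w.toList.dropLast := by
  rw [parent, dif_pos hw]

theorem length_parent (hw : w.length ≠ 0) : w.parent.length + 1 = w.length := by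
  have := w.parent.length_toList
  rw [toList_parent hw, List.length_dropLast, length_toList] at this
  omega

theorem toList_eq_parent_append (hw : w.length ≠ 0) : w.toList = w.parent.toList ++ [w.term] := by
  rw [toList_parent hw]
  exact (List.dropLast_concat_getLast w.ne_nil).symm

theorem getLast?_dropLast (hw : w.length ≠ 0) :
    w.toList.dropLast.getLast? = some w.parent.term := by
  rw [← toList_parent hw, List.getLast?_eq_some_getLast w.parent.ne_nil]
  rfl

theorem parent_extend (hw : w.length < r) (hx : w.CanExtend x) : (w.extend x).parent = w := by
  apply toList_injective
  rw [toList_parent (by rw [length_extend hw hx]; omega), toList_extend hw hx,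
    List.dropLast_concat]

def IsChild (w w' : NBWalk G v r) : Prop := ∃ x, w'.toList = w.toList ++ [x]

theorem isChild_iff : IsChild w w' ↔ w'.length ≠ 0 ∧ w'.parent = w := by
  constructor
  · rintro ⟨x, hx⟩
    have hw' : w'.length ≠ 0 := by
      have := congrArg List.length hx
      rw [List.length_append, length_toList, length_toList] at this
      simp only [List.length_singleton, Nat.add_right_cancel_iff] at this
      omega
    refine ⟨hw', toList_injective ?_⟩
    rw [toList_parent hw', hx, List.dropLast_concat]
  · rintro ⟨hw', rfl⟩
    exact ⟨w'.term, toList_eq_parent_append hw'⟩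

theorem not_isChild_of_isChild (h : IsChild w w') : ¬ IsChild w' w := by
  rw [isChild_iff] at *
  rintro ⟨hw, rfl⟩
  have h₁ := length_parent h.1
  have h₂ := length_parent hw
  rw [h.2] at h₁
  omega

end NBWalk

@[simp] theorem nbRoot_length : (nbRoot G v r).length = 0 := rfl

@[simp] theorem nbRoot_term : (nbRoot G v r).term = v := rfl

theorem unravBall_adj_iff {w w' : NBWalk G v r} :
    (unravBall G v r).Adj w w' ↔ w.IsChild w' ∨ w'.IsChild w := by
  rw [unravBall, fromRel_adj]
  refine ⟨And.right, fun h => ⟨?_, h⟩⟩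
  rintro rfl
  exact h.elim (fun h => NBWalk.not_isChild_of_isChild h h) fun h =>
    NBWalk.not_isChild_of_isChild h h

end Walks

section Levels

variable {V : Type*} [Fintype V] {G : SimpleGraph V} {v : V} {r : ℕ}

namespace NBWalk

variable {w : NBWalk G v r}

noncomputable def next (w : NBWalk G v r) : Finset V := univ.filter w.CanExtend

theorem canExtend_of_mem_next {x : V} (hx : x ∈ w.next) : w.CanExtend x :=
  (mem_filter.1 hx).2

theorem next_of_length_eq_zero (hw : w.length = 0) : w.next = G.neighborFinset w.term := by
  have : w.toList.dropLast = [] := List.eq_nil_of_length_eq_zero (by simp [length_toList, hw])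
  ext x
  simp [next, CanExtend, this]

theorem next_of_length_ne_zero (hw : w.length ≠ 0) :
    w.next = (G.neighborFinset w.term).erase w.parent.term := by
  ext x
  simp [next, CanExtend, getLast?_dropLast hw, and_comm, eq_comm]

theorem filter_isChild_eq_image (hw : w.length < r) :
    univ.filter (IsChild w) = w.next.image w.extend := by
  ext w'
  simp only [mem_filter, mem_univ, true_and, mem_image, next]
  constructor
  · rintro ⟨x, hx⟩
    have hcan := canExtend_of_toList_eq_append hx
    exact ⟨x, hcan, toList_injective (by rw [toList_extend hw hcan, hx])⟩
  · rintro ⟨x, hcan, rfl⟩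
    exact ⟨x, toList_extend hw hcan⟩

theorem sum_isChild (hw : w.length < r) (F : NBWalk G v r → ℝ) :
    ∑ w' ∈ univ.filter (IsChild w), F w' = ∑ x ∈ w.next, F (w.extend x) := by
  rw [filter_isChild_eq_image hw, sum_image]
  intro x hx y hy hxy
  have := congrArg toList hxy
  rw [toList_extend hw (canExtend_of_mem_next hx), toList_extend hw (canExtend_of_mem_next hy)]
    at this
  simpa using this

end NBWalk

variable (G v r) in
noncomputable def level (k : ℕ) : Finset (NBWalk G v r) := univ.filter (·.length = k)

theorem mem_level {w : NBWalk G v r} {k : ℕ} : w ∈ level G v r k ↔ w.length = k := by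
  simp [level]

theorem level_zero : level G v r 0 = {nbRoot G v r} := by
  ext w
  rw [mem_level, mem_singleton]
  refine ⟨fun hw => NBWalk.toList_injective ?_, fun h => h ▸ rfl⟩
  obtain ⟨a, ha⟩ := List.length_eq_one_iff.1 (w.length_toList.trans (by rw [hw]))
  have := w.head_eq
  simp only [ha, List.head_cons] at this
  rw [ha, this]
  rfl

theorem sum_univ_eq_sum_level (F : NBWalk G v r → ℝ) :
    ∑ w, F w = ∑ k ∈ range (r + 1), ∑ w ∈ level G v r k, F w := by
  rw [← sum_fiberwise_of_maps_to (g := NBWalk.length) (t := range (r + 1))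
    (fun w _ => mem_range.2 (Nat.lt_succ_of_le w.length_le_radius))]
  rfl

theorem sum_level_succ {k : ℕ} (hk : k < r) (F : NBWalk G v r → ℝ) :
    ∑ w ∈ level G v r (k + 1), F w =
      ∑ u ∈ level G v r k, ∑ x ∈ u.next, F (u.extend x) := by
  rw [← sum_fiberwise_of_maps_to (g := NBWalk.parent) (t := level G v r k) fun w hw => by
    rw [mem_level] at hw ⊢
    have := NBWalk.length_parent (w := w) (by omega)
    omega]
  refine sum_congr rfl fun u hu => ?_
  rw [mem_level] at hu
  rw [← NBWalk.sum_isChild (by omega)]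
  congr 1
  ext w
  simp only [mem_filter, mem_level, mem_univ, true_and, NBWalk.isChild_iff]
  constructor
  · rintro ⟨hw, rfl⟩
    exact ⟨by omega, rfl⟩
  · rintro ⟨hw, rfl⟩
    exact ⟨by have := NBWalk.length_parent hw; omega, rfl⟩

theorem sum_sum_ite_isChild (F : NBWalk G v r → NBWalk G v r → ℝ) :
    ∑ u, ∑ w, (if u.IsChild w then F u w else 0) =
      ∑ k ∈ range r, ∑ w ∈ level G v r (k + 1), F w.parent w := by
  have sum_parents (w : NBWalk G v r) :
      ∑ u, (if u.IsChild w then F u w else 0) = if w.length = 0 then 0 else F w.parent w := by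
    simp_rw [NBWalk.isChild_iff]
    by_cases hw : w.length = 0 <;> simp [hw]
  rw [sum_comm]
  simp_rw [sum_parents]
  rw [sum_univ_eq_sum_level, sum_range_succ', sum_eq_zero (s := level G v r 0) fun w hw => by
    rw [if_pos (mem_level.1 hw)], add_zero]
  refine sum_congr rfl fun k _ => sum_congr rfl fun w hw => ?_
  rw [if_neg (by rw [mem_level.1 hw]; omega)]

end Levels

section Weights

variable {V : Type*} [Fintype V] {G : SimpleGraph V} {v : V} {r : ℕ}

namespace NBWalk

variable {w : NBWalk G v r} {x : V}

noncomputable def weight (w : NBWalk G v r) : ℝ :=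
  (w.toList.dropLast.tail.map fun u => ((G.degree u : ℝ) - 1)⁻¹).prod

theorem weight_pos (hdeg : ∀ u, 2 ≤ G.degree u) (w : NBWalk G v r) : 0 < w.weight := by
  refine List.prod_pos fun a ha => ?_
  obtain ⟨u, -, rfl⟩ := List.mem_map.1 ha
  have : (2 : ℝ) ≤ G.degree u := by exact_mod_cast hdeg u
  exact inv_pos.2 (by linarith)

theorem weight_of_length_le_one (hw : w.length ≤ 1) : w.weight = 1 := by
  have : w.toList.dropLast.tail = [] :=
    List.eq_nil_of_length_eq_zero
      (by simp only [List.length_tail, List.length_dropLast, length_toList]; omega)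
  simp [weight, this]

theorem weight_eq_parent_weight_mul (hw : w.length ≠ 0) (hp : w.parent.length ≠ 0) :
    w.weight = w.parent.weight * ((G.degree w.parent.term : ℝ) - 1)⁻¹ := by
  have hq : w.parent.parent.toList ≠ [] := w.parent.parent.ne_nil
  rw [weight, weight, toList_eq_parent_append hw, List.dropLast_concat,
    toList_eq_parent_append hp, List.dropLast_concat, List.tail_append_of_ne_nil hq,
    List.map_append, List.prod_append]
  simp

theorem weight_extend (hw : w.length < r) (hx : w.CanExtend x) :
    (w.extend x).weight =
      if w.length = 0 then 1 else w.weight * ((G.degree w.term : ℝ) - 1)⁻¹ := by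
  have hlen := length_extend hw hx
  split_ifs with h0
  · exact weight_of_length_le_one (by omega)
  · rw [weight_eq_parent_weight_mul (by omega) (by rwa [parent_extend hw hx]),
      parent_extend hw hx]

end NBWalk

theorem sum_sum_level_succ_weight_mul (hdeg : ∀ u, 2 ≤ G.degree u) (h : V → V → ℝ)
    {k : ℕ} (hk : k < r) :
    ∑ v, ∑ w ∈ level G v r (k + 1), w.weight * h w.parent.term w.term =
      ∑ a, ∑ b ∈ G.neighborFinset a, h a b := by
  induction k generalizing h with
  | zero =>
    refine sum_congr rfl fun v _ => ?_
    rw [sum_level_succ hk, level_zero, sum_singleton,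
      NBWalk.next_of_length_eq_zero nbRoot_length]
    refine sum_congr rfl fun x hx => ?_
    have hcan : (nbRoot G v r).CanExtend x := NBWalk.canExtend_of_mem_next
      (by rwa [NBWalk.next_of_length_eq_zero nbRoot_length])
    rw [NBWalk.weight_extend hk hcan, NBWalk.parent_extend hk hcan,
      NBWalk.term_extend hk hcan]
    simp
  | succ k ih =>
    set H : V → V → ℝ :=
      fun a b => ((G.degree b : ℝ) - 1)⁻¹ * ∑ x ∈ (G.neighborFinset b).erase a, h b x
    have step (v : V) :
        ∑ w ∈ level G v r (k + 2), w.weight * h w.parent.term w.term =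
          ∑ u ∈ level G v r (k + 1), u.weight * H u.parent.term u.term := by
      rw [sum_level_succ hk]
      refine sum_congr rfl fun u hu => ?_
      have hu : u.length = k + 1 := mem_level.1 hu
      simp only [H]
      rw [← NBWalk.next_of_length_ne_zero (by omega), mul_sum, mul_sum]
      refine sum_congr rfl fun x hx => ?_
      have hcan := NBWalk.canExtend_of_mem_next hx
      rw [NBWalk.weight_extend (by omega) hcan, NBWalk.parent_extend (by omega) hcan,
        NBWalk.term_extend (by omega) hcan, if_neg (by omega), mul_assoc]
    simp_rw [step]
    rw [ih H (by omega), G.sum_sum_neighborFinset_comm]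
    refine sum_congr rfl fun b _ => ?_
    have hb : (2 : ℝ) ≤ G.degree b := by exact_mod_cast hdeg b
    rw [← mul_sum, sum_sum_erase, card_neighborFinset_eq_degree, ← mul_assoc,
      inv_mul_cancel₀ (by linarith), one_mul]

end Weights

section TestVector

variable {V : Type*} [Fintype V] {G : SimpleGraph V} {v : V} {r : ℕ}

namespace NBWalk

variable {w : NBWalk G v r}

noncomputable def mass (w : NBWalk G v r) : ℝ := if w.length = 0 then G.degree v else w.weight

theorem mass_of_length_ne_zero (hw : w.length ≠ 0) : w.mass = w.weight := if_neg hw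

theorem mass_nonneg (hdeg : ∀ u, 2 ≤ G.degree u) (w : NBWalk G v r) : 0 ≤ w.mass := by
  unfold mass
  split_ifs
  exacts [Nat.cast_nonneg _, (w.weight_pos hdeg).le]

theorem sqrt_mass_parent_mul_sqrt_mass (hdeg : ∀ u, 2 ≤ G.degree u) (hw : w.length ≠ 0)
    (hp : w.parent.length ≠ 0) :
    √w.parent.mass * √w.mass = w.weight * √((G.degree w.parent.term : ℝ) - 1) := by
  have hP := w.parent.weight_pos hdeg
  rw [mass_of_length_ne_zero hw, mass_of_length_ne_zero hp, weight_eq_parent_weight_mul hw hp,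
    Real.sqrt_mul hP.le, ← mul_assoc, Real.mul_self_sqrt hP.le, Real.sqrt_inv, mul_assoc,
    inv_eq_one_div, ← Real.sqrt_div_self', div_eq_inv_mul]

end NBWalk

theorem sum_sum_level_mass (hdeg : ∀ u, 2 ≤ G.degree u) {k : ℕ} (hk : k ≤ r) :
    ∑ v, ∑ w ∈ level G v r k, w.mass = 2 * #G.edgeFinset := by
  have hE : ∑ a, (G.degree a : ℝ) = 2 * #G.edgeFinset := by
    exact_mod_cast G.sum_degrees_eq_twice_card_edges
  cases k with
  | zero => simpa [level_zero, NBWalk.mass] using hE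
  | succ k =>
    have := sum_sum_level_succ_weight_mul hdeg (fun _ _ => 1) (r := r) (k := k) (by omega)
    simp only [mul_one, sum_const, card_neighborFinset_eq_degree, nsmul_one] at this
    rw [← hE, ← this]
    refine sum_congr rfl fun v _ => sum_congr rfl fun w hw => ?_
    rw [NBWalk.mass_of_length_ne_zero (by rw [mem_level.1 hw]; omega)]

theorem sum_degree_mul_sqrt_le_sum_sum_level (hdeg : ∀ u, 2 ≤ G.degree u) {k : ℕ}
    (hk : k < r) :
    ∑ u, (G.degree u : ℝ) * √((G.degree u : ℝ) - 1) ≤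
      ∑ v, ∑ w ∈ level G v r (k + 1), √w.parent.mass * √w.mass := by
  cases k with
  | zero =>
    refine sum_le_sum fun v _ => ?_
    rw [sum_level_succ hk, level_zero, sum_singleton,
      NBWalk.next_of_length_eq_zero nbRoot_length, nbRoot_term]
    have child (x : V) (hx : x ∈ G.neighborFinset v) :
        √((nbRoot G v r).extend x).parent.mass * √((nbRoot G v r).extend x).mass =
          √(G.degree v : ℝ) := by
      have hcan : (nbRoot G v r).CanExtend x := NBWalk.canExtend_of_mem_next
        (by rwa [NBWalk.next_of_length_eq_zero nbRoot_length])
      have hlen : ((nbRoot G v r).extend x).length = 1 := NBWalk.length_extend hk hcan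
      rw [NBWalk.parent_extend hk hcan,
        NBWalk.mass_of_length_ne_zero (w := (nbRoot G v r).extend x) (by omega),
        NBWalk.weight_of_length_le_one hlen.le]
      simp [NBWalk.mass]
    rw [sum_congr rfl child, sum_const, card_neighborFinset_eq_degree, nsmul_eq_mul]
    gcongr
    linarith
  | succ k =>
    have := sum_sum_level_succ_weight_mul hdeg (fun a _ => √((G.degree a : ℝ) - 1)) hk
    simp only [sum_const, card_neighborFinset_eq_degree, nsmul_eq_mul] at this
    rw [← this]
    refine le_of_eq (sum_congr rfl fun v _ => sum_congr rfl fun w hw => ?_)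
    have hw := mem_level.1 hw
    exact (NBWalk.sqrt_mass_parent_mul_sqrt_mass hdeg (by omega)
      (by have := NBWalk.length_parent (w := w) (by omega); omega)).symm

variable (G v r) in
noncomputable def testVec (s : ℕ → ℝ) (w : NBWalk G v r) : ℝ := s w.length * √w.mass

theorem dotProduct_self_testVec (hdeg : ∀ u, 2 ≤ G.degree u) (s : ℕ → ℝ) :
    testVec G v r s ⬝ᵥ testVec G v r s =
      ∑ k ∈ range (r + 1), s k ^ 2 * ∑ w ∈ level G v r k, w.mass := by
  rw [dotProduct, sum_univ_eq_sum_level]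
  refine sum_congr rfl fun k _ => ?_
  rw [mul_sum]
  refine sum_congr rfl fun w hw => ?_
  rw [testVec, mem_level.1 hw, mul_mul_mul_comm, Real.mul_self_sqrt (w.mass_nonneg hdeg), sq]

theorem dotProduct_self_testVec_pos (hdeg : ∀ u, 2 ≤ G.degree u) {s : ℕ → ℝ}
    (hs : s 0 ≠ 0) :
    0 < testVec G v r s ⬝ᵥ testVec G v r s := by
  rw [dotProduct_self_testVec hdeg, sum_range_succ', level_zero, sum_singleton]
  have hv : (0 : ℝ) < G.degree v := by exact_mod_cast (two_pos.trans_le (hdeg v))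
  refine add_pos_of_nonneg_of_pos (sum_nonneg fun k _ => ?_) ?_
  · exact mul_nonneg (sq_nonneg _) (sum_nonneg fun w _ => w.mass_nonneg hdeg)
  · simp only [NBWalk.mass, nbRoot_length, if_true]
    exact mul_pos (by positivity) hv

theorem sum_dotProduct_self_testVec (hdeg : ∀ u, 2 ≤ G.degree u) (s : ℕ → ℝ) :
    ∑ v, testVec G v r s ⬝ᵥ testVec G v r s =
      2 * #G.edgeFinset * ∑ k ∈ range (r + 1), s k ^ 2 := by
  simp_rw [dotProduct_self_testVec hdeg]
  rw [sum_comm, mul_sum]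
  refine sum_congr rfl fun k hk => ?_
  rw [← mul_sum, sum_sum_level_mass hdeg (Nat.lt_succ_iff.1 (mem_range.1 hk)), mul_comm]

theorem dotProduct_adjMatrix_mulVec_testVec (s : ℕ → ℝ) :
    testVec G v r s ⬝ᵥ (unravBall G v r).adjMatrix ℝ *ᵥ testVec G v r s =
      2 * ∑ k ∈ range r, s k * s (k + 1) *
        ∑ w ∈ level G v r (k + 1), √w.parent.mass * √w.mass := by
  rw [dotProduct_adjMatrix_mulVec_eq_of_adj_iff _ (fun _ _ => unravBall_adj_iff)
    (fun _ _ => NBWalk.not_isChild_of_isChild), sum_sum_ite_isChild]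
  congr 1
  refine sum_congr rfl fun k _ => ?_
  rw [mul_sum]
  refine sum_congr rfl fun w hw => ?_
  have hw := mem_level.1 hw
  have hp := NBWalk.length_parent (w := w) (by omega)
  rw [testVec, testVec, hw, show w.parent.length = k by omega]
  ring

theorem le_sum_dotProduct_adjMatrix_mulVec_testVec (hdeg : ∀ u, 2 ≤ G.degree u)
    {s : ℕ → ℝ} (hs : ∀ k < r, 0 ≤ s k * s (k + 1)) :
    2 * (∑ u, (G.degree u : ℝ) * √((G.degree u : ℝ) - 1)) *
        ∑ k ∈ range r, s k * s (k + 1) ≤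
      ∑ v, testVec G v r s ⬝ᵥ (unravBall G v r).adjMatrix ℝ *ᵥ testVec G v r s := by
  simp_rw [dotProduct_adjMatrix_mulVec_testVec, ← mul_sum]
  rw [mul_assoc, sum_comm, mul_sum]
  gcongr 2 * ?_
  refine sum_le_sum fun k hk => ?_
  rw [← mul_sum, mul_comm]
  exact mul_le_mul_of_nonneg_left (sum_degree_mul_sqrt_le_sum_sum_level hdeg (mem_range.1 hk))
    (hs k (mem_range.1 hk))

theorem exists_le_lam1_unravBall_of_sum_mul_succ_eq [Nonempty V] (hdeg : ∀ u, 2 ≤ G.degree u)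
    {s : ℕ → ℝ} (hs₀ : s 0 ≠ 0) (hs : ∀ k < r, 0 ≤ s k * s (k + 1)) {c : ℝ}
    (hc : ∑ k ∈ range r, s k * s (k + 1) = c * ∑ k ∈ range (r + 1), s k ^ 2) :
    ∃ v, 1 / #G.edgeFinset * (∑ u, (G.degree u : ℝ) * √((G.degree u : ℝ) - 1)) * c ≤
      lam1 (unravBall G v r) := by
  have hE : (0 : ℝ) < #G.edgeFinset := by
    have h₁ := G.sum_degrees_eq_twice_card_edges
    have h₂ : 0 < ∑ u, G.degree u :=
      sum_pos (fun u _ => two_pos.trans_le (hdeg u)) univ_nonempty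
    exact_mod_cast (by omega : 0 < #G.edgeFinset)
  obtain ⟨v, -, hv⟩ := exists_le_of_sum_le univ_nonempty
    (f := fun v => 1 / #G.edgeFinset * (∑ u, (G.degree u : ℝ) * √((G.degree u : ℝ) - 1)) *
      c * (testVec G v r s ⬝ᵥ testVec G v r s))
    (g := fun v => testVec G v r s ⬝ᵥ (unravBall G v r).adjMatrix ℝ *ᵥ testVec G v r s)
    <| by
      rw [← mul_sum, sum_dotProduct_self_testVec hdeg]
      refine le_of_eq_of_le ?_ (le_sum_dotProduct_adjMatrix_mulVec_testVec hdeg hs)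
      rw [hc]
      field_simp
  exact ⟨v, le_of_mul_le_mul_right (hv.trans (dotProduct_adjMatrix_mulVec_le_lam1_mul _ _))
    (dotProduct_self_testVec_pos hdeg hs₀)⟩

end TestVector

/-- For any finite graph of minimum degree `≥ 2` and any `r`, some unraveled ball of
radius `r` has spectral radius at least
`(1/|E|) ∑ d(u) √(d(u)-1) · cos (π / (r + 2))`. -/
theorem exists_unravBall_lam1_ge {V : Type*} [Fintype V] [Nonempty V] (G : SimpleGraph V)
    (hdeg : ∀ u, 2 ≤ G.degree u) (r : ℕ) :
    ∃ v : V,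
      (1 / (G.edgeFinset.card : ℝ)) *
          (∑ u, (G.degree u : ℝ) * Real.sqrt ((G.degree u : ℝ) - 1)) *
          Real.cos (π / (r + 2))
        ≤ lam1 (unravBall G v r) := by
  set θ := π / (r + 2) with hθ
  have hθ₀ : 0 < θ := by positivity
  have hπ : ((r : ℝ) + 2) * θ = π := by rw [hθ]; field_simp
  let s : ℕ → ℝ := fun k => sin ((k + 1) * θ)
  have hs₀ : s 0 ≠ 0 := by
    refine (sin_pos_of_pos_of_lt_pi (by simpa) ?_).ne'
    simp only [CharP.cast_eq_zero, zero_add, one_mul]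
    nlinarith
  have hs (k : ℕ) (hk : k < r) : 0 ≤ s k * s (k + 1) := by
    have hk : (k : ℝ) + 2 ≤ r + 2 := by exact_mod_cast (by omega : k + 2 ≤ r + 2)
    apply mul_nonneg <;> apply sin_nonneg_of_nonneg_of_le_pi (by positivity)
    · nlinarith
    · push_cast; nlinarith
  refine exists_le_lam1_unravBall_of_sum_mul_succ_eq hdeg hs₀ hs ?_
  have := sum_range_sin_mul_sin_eq_cos_mul_sum_sq θ r (by rw [hπ, sin_pi])
  simpa [s, add_assoc, one_add_one_eq_two] using this
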